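/- arXiv:2002.02694 — 4 statements merged into one kernel-verified Lean document; each statement's English description precedes it below -/
import Mathlib

section
/- Every powerfully nilpotent p-group that can be generated by 2 elements is strongly powerful. -/
/-- `H.pPow k` is the subgroup generated by the `k`-th powers of the elements of `H`. -/
def Subgroup.pPow {G : Type*} [Group G] (H : Subgroup G) (k : ℕ) : Subgroup G :=
  Subgroup.closure ((fun x => x ^ k) '' (H : Set G))

/-- A `p`-group `G` is powerful if `p` is odd and `[G,G] ≤ G^p`, or `p = 2` and `[G,G] ≤ G^4`. -/
def IsPowerfulGroup (p : ℕ) (G : Type*) [Group G] : Prop :=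
  IsPGroup p G ∧
    ((Odd p ∧ commutator G ≤ Subgroup.pPow ⊤ p) ∨
      (p = 2 ∧ commutator G ≤ Subgroup.pPow ⊤ 4))

/-- A powerful `p`-group is powerfully nilpotent if it has an ascending chain of subgroups
`⊥ = H 0 ≤ H 1 ≤ ⋯ ≤ H n = ⊤` that is powerfully central, i.e. `[H (i+1), G] ≤ (H i)^p`. -/
def IsPowerfullyNilpotent (p : ℕ) (G : Type*) [Group G] : Prop :=
  IsPowerfulGroup p G ∧
    ∃ (n : ℕ) (H : ℕ → Subgroup G), H 0 = ⊥ ∧ H n = ⊤ ∧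
      (∀ i < n, H i ≤ H (i + 1)) ∧
      ∀ i < n, ⁅H (i + 1), (⊤ : Subgroup G)⁆ ≤ (H i).pPow p

/-- A finite `p`-group `G` is strongly powerful if `[G,G] ≤ G^(p^2)`. -/
def IsStronglyPowerful (p : ℕ) (G : Type*) [Group G] : Prop :=
  commutator G ≤ Subgroup.pPow ⊤ (p ^ 2)

/-!
For `p = 2`, powerfulness already says `[G, G] ≤ G ^ 4`. For odd `p` it suffices to show that
`Q = G / G ^ (p ^ 2)` is abelian. Going up the powerfully central chain, every `(H i) ^ p` consists
of central elements of order dividing `p`; hence `Q` has class at most two, its commutators have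
order dividing `p`, and `g ↦ g ^ p` is a homomorphism. Write `Q = ⟨a, b⟩` and `c = [a, b]`. If
`c = h ^ p` with `h ∈ H (j + 1)`, then `h ^ p = a ^ (p x) b ^ (p y)`, `[h, b] = c ^ x` and
`[h, a] = c ^ (-y)` for some integers `x, y`, and the last two lie in `(H j) ^ p`. Either `p`
divides both `x` and `y`, so that `c = h ^ p = 1`, or `c ∈ (H j) ^ p`. Descending the chain gives
`c ∈ (H 0) ^ p = 1`.
-/

open Subgroup
open scoped commutatorElement

namespace Subgroup

variable {G G' : Type*} [Group G] [Group G']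

lemma pow_mem_pPow {K : Subgroup G} {g : G} (hg : g ∈ K) (k : ℕ) : g ^ k ∈ K.pPow k :=
  subset_closure ⟨g, hg, rfl⟩

lemma pPow_bot (k : ℕ) : (⊥ : Subgroup G).pPow k = ⊥ := by
  simp [pPow]

lemma pPow_mono {K L : Subgroup G} (h : K ≤ L) (k : ℕ) : K.pPow k ≤ L.pPow k :=
  closure_mono (Set.image_mono h)

lemma map_pPow_le (f : G →* G') (K : Subgroup G) (k : ℕ) :
    (K.pPow k).map f ≤ (K.map f).pPow k := by
  rw [pPow, MonoidHom.map_closure]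
  refine closure_mono ?_
  rintro _ ⟨_, ⟨g, hg, rfl⟩, rfl⟩
  exact ⟨f g, mem_map_of_mem f hg, (map_pow f g k).symm⟩

lemma pPow_eq_map {f : G →* G} {k : ℕ} (hf : ∀ g, f g = g ^ k) (K : Subgroup G) :
    K.pPow k = K.map f := by
  rw [pPow, show (fun g => g ^ k) = f from funext fun g => (hf g).symm, ← MonoidHom.map_closure,
    closure_eq]

instance pPow_top_characteristic (k : ℕ) : ((⊤ : Subgroup G).pPow k).Characteristic :=
  characteristic_iff_map_le.mpr fun φ =>
    (map_pPow_le φ.toMonoidHom ⊤ k).trans (pPow_mono le_top k)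

lemma quotient_pPow_top_pow_eq_one (k : ℕ) (q : G ⧸ (⊤ : Subgroup G).pPow k) : q ^ k = 1 := by
  obtain ⟨g, rfl⟩ := QuotientGroup.mk'_surjective _ q
  rw [← map_pow, QuotientGroup.mk'_apply, QuotientGroup.eq_one_iff]
  exact pow_mem_pPow (mem_top g) k

lemma mem_of_zpow_mem {K : Subgroup G} {g : G} {p : ℕ} (hp : p.Prime) (hg : g ^ p = 1)
    {x : ℤ} (hx : ¬(p : ℤ) ∣ x) (h : g ^ x ∈ K) : g ∈ K := by
  obtain ⟨u, v, huv⟩ := (Prime.coprime_iff_not_dvd (Nat.prime_iff_prime_int.mp hp)).mpr hx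
  have : g = (g ^ (p : ℤ)) ^ u * (g ^ x) ^ v := by
    rw [← zpow_mul, ← zpow_mul, ← zpow_add, mul_comm _ u, mul_comm x, huv, zpow_one]
  rw [this, zpow_natCast, hg, one_zpow, one_mul]
  exact zpow_mem h v

end Subgroup

section ClassTwo

variable {G : Type*} [Group G]

lemma commutatorElement_pow_left_of_mem_center {u v : G} (h : ⁅u, v⁆ ∈ center G) (k : ℕ) :
    ⁅u ^ k, v⁆ = ⁅u, v⁆ ^ k := by
  induction k with
  | zero => simp
  | succ k ih =>
    rw [pow_succ', commutatorElement_mul_left_eq_conj_mul, ih, mem_center_iff.mp (pow_mem h k),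
      mul_inv_cancel_right, pow_succ]

lemma pow_mem_center_of_commutatorElement_pow_eq_one {u : G} {k : ℕ}
    (hu : ∀ v : G, ⁅u, v⁆ ∈ center G) (hk : ∀ v : G, ⁅u, v⁆ ^ k = 1) : u ^ k ∈ center G :=
  mem_center_iff.mpr fun v => by
    have : ⁅u ^ k, v⁆ = 1 := by rw [commutatorElement_pow_left_of_mem_center (hu v), hk]
    exact (commutatorElement_eq_one_iff_mul_comm.mp this).symm

def commutatorElementLeftHom (hc : ∀ x y : G, ⁅x, y⁆ ∈ center G) (v : G) : G →* center G where
  toFun u := ⟨⁅u, v⁆, hc u v⟩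
  map_one' := by ext; simp
  map_mul' u w := by
    ext
    show ⁅u * w, v⁆ = ⁅u, v⁆ * ⁅w, v⁆
    rw [commutatorElement_mul_left_eq_conj_mul, mem_center_iff.mp (hc w v) u,
      mul_inv_cancel_right]
    exact mem_center_iff.mp (hc u v) _

lemma mul_pow_eq_mul_commutatorElement_pow_choose (hc : ∀ x y : G, ⁅x, y⁆ ∈ center G)
    (x y : G) (k : ℕ) : (x * y) ^ k = x ^ k * y ^ k * ⁅y, x⁆ ^ k.choose 2 := by
  induction k with
  | zero => simp
  | succ k ih =>
    have hyx : y ^ k * x = ⁅y, x⁆ ^ k * (x * y ^ k) := by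
      rw [← commutatorElement_pow_left_of_mem_center (hc y x)]; group
    have hz (m : ℕ) (g : G) : g * ⁅y, x⁆ ^ m = ⁅y, x⁆ ^ m * g :=
      mem_center_iff.mp (pow_mem (hc y x) m) g
    calc (x * y) ^ (k + 1) = ⁅y, x⁆ ^ k.choose 2 * (x ^ k * (y ^ k * x) * y) := by
          rw [pow_succ, ih, hz]; group
      _ = ⁅y, x⁆ ^ k.choose 2 * (⁅y, x⁆ ^ k * (x ^ (k + 1) * y ^ (k + 1))) := by
          rw [hyx, ← mul_assoc (x ^ k), hz k (x ^ k)]; group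
      _ = x ^ (k + 1) * y ^ (k + 1) * ⁅y, x⁆ ^ (k + 1).choose 2 := by
          rw [← mul_assoc, ← pow_add, ← hz, Nat.choose_succ_succ' k 1, Nat.choose_one_right,
            Nat.add_comm (k.choose 2)]

lemma mul_pow_of_odd (hc : ∀ x y : G, ⁅x, y⁆ ∈ center G) {p : ℕ} (hodd : Odd p)
    (hcp : ∀ x y : G, ⁅x, y⁆ ^ p = 1) (x y : G) : (x * y) ^ p = x ^ p * y ^ p := by
  obtain ⟨m, rfl⟩ := hodd
  have hchoose : (2 * m + 1).choose 2 = (2 * m + 1) * m := by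
    rw [Nat.choose_two_right, Nat.add_sub_cancel, mul_left_comm, Nat.mul_div_cancel_left _ two_pos]
  rw [mul_pow_eq_mul_commutatorElement_pow_choose hc, hchoose, pow_mul, hcp, one_pow, mul_one]

def powCenterHom (hc : ∀ x y : G, ⁅x, y⁆ ∈ center G) {p : ℕ} (hodd : Odd p)
    (hcp : ∀ x y : G, ⁅x, y⁆ ^ p = 1) : G →* center G where
  toFun g := ⟨g ^ p, pow_mem_center_of_commutatorElement_pow_eq_one (hc g) (hcp g)⟩
  map_one' := by ext; simp
  map_mul' x y := by ext; exact mul_pow_of_odd hc hodd hcp x y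

open scoped IsMulCommutative in
lemma exists_zpow_of_closure_pair_eq_top (hc : ∀ x y : G, ⁅x, y⁆ ∈ center G) {p : ℕ}
    (hodd : Odd p) (hcp : ∀ x y : G, ⁅x, y⁆ ^ p = 1) {a b : G} (hab : closure {a, b} = ⊤)
    (g : G) : ∃ x y : ℤ,
      ⁅g, a⁆ = ⁅b, a⁆ ^ y ∧ ⁅g, b⁆ = ⁅a, b⁆ ^ x ∧ g ^ p = (a ^ p) ^ x * (b ^ p) ^ y := by
  -- `Ψ` lands in an abelian group, where `closure {Ψ a, Ψ b}` is `{Ψ a ^ x * Ψ b ^ y}`.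
  let Ψ : G →* center G × center G × center G := (commutatorElementLeftHom hc a).prod
    ((commutatorElementLeftHom hc b).prod (powCenterHom hc hodd hcp))
  have hg : Ψ g ∈ closure {Ψ a, Ψ b} := by
    rw [← Set.image_pair, ← MonoidHom.map_closure, hab]
    exact mem_map_of_mem Ψ (mem_top g)
  obtain ⟨x, y, hxy⟩ := mem_closure_pair.mp hg
  refine ⟨x, y, ?_, ?_, ?_⟩
  · have := congrArg (fun t => (t.1 : G)) hxy
    simpa [Ψ, commutatorElementLeftHom] using this.symm
  · have := congrArg (fun t => (t.2.1 : G)) hxy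
    simpa [Ψ, commutatorElementLeftHom] using this.symm
  · have := congrArg (fun t => (t.2.2 : G)) hxy
    simpa [Ψ, powCenterHom] using this.symm

end ClassTwo

lemma isMulCommutative_of_closure_pair_eq_top {G : Type*} [Group G] {a b : G}
    (hab : closure {a, b} = ⊤) (h : Commute a b) : IsMulCommutative G := by
  have := isMulCommutative_closure (k := {a, b}) (by
    simp only [Set.mem_insert_iff, Set.mem_singleton_iff]
    rintro x (rfl | rfl) y (rfl | rfl) <;> first | rfl | exact h.eq | exact h.eq.symm)
  refine ⟨⟨fun x y => ?_⟩⟩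
  have hx : x ∈ closure {a, b} := hab ▸ mem_top x
  have hy : y ∈ closure {a, b} := hab ▸ mem_top y
  exact congrArg Subtype.val (mul_comm' (⟨x, hx⟩ : closure {a, b}) ⟨y, hy⟩)

def Subgroup.centerTorsionBy (G : Type*) [Group G] (k : ℕ) : Subgroup G where
  carrier := {z | z ∈ center G ∧ z ^ k = 1}
  one_mem' := ⟨one_mem _, one_pow k⟩
  mul_mem' {z w} hz hw := ⟨mul_mem hz.1 hw.1, by
    rw [Commute.mul_pow (mem_center_iff.mp hw.1 z), hz.2, hw.2, one_mul]⟩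
  inv_mem' {z} hz := ⟨inv_mem hz.1, by rw [inv_pow, hz.2, inv_one]⟩

def IsPowerfullyCentral {G : Type*} [Group G] (p n : ℕ) (H : ℕ → Subgroup G) : Prop :=
  ∀ i < n, ⁅H (i + 1), (⊤ : Subgroup G)⁆ ≤ (H i).pPow p

namespace IsPowerfullyCentral

variable {G G' : Type*} [Group G] [Group G'] {p n : ℕ} {H : ℕ → Subgroup G}

lemma map (hH : IsPowerfullyCentral p n H) {f : G →* G'} (hf : Function.Surjective f) :
    IsPowerfullyCentral p n fun i => (H i).map f := fun i hi => by
  rw [← map_top_of_surjective f hf, ← map_commutator]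
  exact (map_mono (hH i hi)).trans (map_pPow_le f (H i) p)

lemma pPow_le_centerTorsionBy (hH : IsPowerfullyCentral p n H) (hexp : ∀ g : G, g ^ p ^ 2 = 1)
    (h0 : H 0 = ⊥) : ∀ i ≤ n, (H i).pPow p ≤ centerTorsionBy G p
  | 0, _ => by rw [h0, pPow_bot]; exact bot_le
  | i + 1, hi => by
    have hZ := hH.pPow_le_centerTorsionBy hexp h0 i (by omega)
    refine (closure_le _).mpr ?_
    rintro _ ⟨h, hh, rfl⟩
    have hcomm (g : G) : ⁅h, g⁆ ∈ centerTorsionBy G p :=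
      hZ (hH i hi (commutator_mem_commutator hh (mem_top g)))
    exact ⟨pow_mem_center_of_commutatorElement_pow_eq_one (fun g => (hcomm g).1)
      (fun g => (hcomm g).2), by rw [← pow_mul, ← sq, hexp]⟩

end IsPowerfullyCentral

lemma commutatorElement_mem_pPow_of_commutator_le {G : Type*} [Group G]
    (hc : ∀ x y : G, ⁅x, y⁆ ∈ center G) {p : ℕ} (hp : p.Prime) (hodd : Odd p)
    (hcp : ∀ x y : G, ⁅x, y⁆ ^ p = 1) (hexp : ∀ g : G, g ^ p ^ 2 = 1) {a b : G}
    (hab : closure {a, b} = ⊤) {K L : Subgroup G} (hKL : ⁅K, ⊤⁆ ≤ L.pPow p)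
    (h : ⁅a, b⁆ ∈ K.pPow p) : ⁅a, b⁆ ∈ L.pPow p := by
  rw [pPow_eq_map (f := (center G).subtype.comp (powCenterHom hc hodd hcp)) fun _ => rfl] at h
  obtain ⟨g, hg, hgc⟩ := h
  obtain ⟨x, y, hga, hgb, hgp⟩ := exists_zpow_of_closure_pair_eq_top hc hodd hcp hab g
  have hx : ⁅a, b⁆ ^ x ∈ L.pPow p := hgb ▸ hKL (commutator_mem_commutator hg (mem_top b))
  have hy : ⁅b, a⁆ ^ y ∈ L.pPow p := hga ▸ hKL (commutator_mem_commutator hg (mem_top a))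
  by_cases hpx : (p : ℤ) ∣ x
  · by_cases hpy : (p : ℤ) ∣ y
    · have hpow (u : G) (m : ℤ) : (u ^ p) ^ ((p : ℤ) * m) = 1 := by
        rw [zpow_mul, zpow_natCast, ← pow_mul, ← sq, hexp, one_zpow]
      obtain ⟨x', rfl⟩ := hpx
      obtain ⟨y', rfl⟩ := hpy
      have hc1 : ⁅a, b⁆ = 1 := by
        rw [← hgc]
        exact hgp.trans (by rw [hpow, hpow, one_mul])
      rw [hc1]
      exact one_mem _
    · rw [← commutatorElement_inv]
      exact inv_mem (mem_of_zpow_mem hp (hcp b a) hpy hy)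
  · exact mem_of_zpow_mem hp (hcp a b) hpx hx

theorem IsPowerfullyCentral.isMulCommutative {G : Type*} [Group G] {p n : ℕ}
    {H : ℕ → Subgroup G} (hH : IsPowerfullyCentral p n H) (hp : p.Prime) (hodd : Odd p)
    (hexp : ∀ g : G, g ^ p ^ 2 = 1) (h0 : H 0 = ⊥) (hn : H n = ⊤) {a b : G}
    (hab : closure {a, b} = ⊤) : IsMulCommutative G := by
  refine isMulCommutative_of_closure_pair_eq_top hab (commutatorElement_eq_one_iff_commute.mp ?_)
  obtain _ | n := n
  · exact mem_bot.mp (h0 ▸ hn ▸ mem_top _)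
  have htop (x y : G) : ⁅x, y⁆ ∈ (H n).pPow p :=
    hH n n.lt_succ_self (commutator_mem_commutator (hn ▸ mem_top x) (mem_top y))
  have hZ (x y : G) : ⁅x, y⁆ ∈ centerTorsionBy G p :=
    hH.pPow_le_centerTorsionBy hexp h0 n n.le_succ (htop x y)
  have hdesc : ∀ j ≤ n, ⁅a, b⁆ ∈ (H j).pPow p → ⁅a, b⁆ = 1 := by
    intro j
    induction j with
    | zero => intro _ h; rwa [h0, pPow_bot, mem_bot] at h
    | succ j ih =>
      intro hj h
      exact ih (by omega) (commutatorElement_mem_pPow_of_commutator_le (fun x y => (hZ x y).1) hp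
        hodd (fun x y => (hZ x y).2) hexp hab (hH j (by omega)) h)
  exact hdesc n le_rfl (htop a b)

theorem isStronglyPowerful_of_isPowerfullyNilpotent_of_two_generated_general
    (p : ℕ) (hp : p.Prime) (G : Type*) [Group G]
    (hG : IsPowerfullyNilpotent p G)
    (hgen : ∃ a b : G, Subgroup.closure ({a, b} : Set G) = ⊤) :
    IsStronglyPowerful p G := by
  obtain ⟨⟨-, ⟨hodd, -⟩ | ⟨rfl, hpow⟩⟩, n, H, h0, hn, -, hH⟩ := hG
  · obtain ⟨a, b, hab⟩ := hgen
    let π := QuotientGroup.mk' ((⊤ : Subgroup G).pPow (p ^ 2))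
    have hπ : Function.Surjective π := QuotientGroup.mk'_surjective _
    rw [IsStronglyPowerful, ← Subgroup.Normal.quotient_commutative_iff_commutator_le]
    refine (IsPowerfullyCentral.map hH hπ).isMulCommutative hp hodd
      (quotient_pPow_top_pow_eq_one _) (by simp [h0])
      (by simp [hn, map_top_of_surjective π hπ]) (a := π a) (b := π b) ?_
    rw [← Set.image_pair, ← MonoidHom.map_closure, hab, map_top_of_surjective π hπ]
  · exact hpow

/-- Every powerfully nilpotent `p`-group that can be generated by 2 elements is
strongly powerful. -/
theorem isStronglyPowerful_of_isPowerfullyNilpotent_of_two_generated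
    (p : ℕ) (hp : p.Prime) (G : Type*) [Group G] [Finite G]
    (hG : IsPowerfullyNilpotent p G)
    (hgen : ∃ a b : G, Subgroup.closure ({a, b} : Set G) = ⊤) :
    IsStronglyPowerful p G :=
  isStronglyPowerful_of_isPowerfullyNilpotent_of_two_generated_general p hp G hG hgen
end

section
/- Let p be a prime and let (n,m,r) and (n',m',r') be triples of integers with 2 ≤ r ≤ n − 1, n − r ≤ m, 2 ≤ r' ≤ n' − 1 and n' − r' ≤ m'. If the groups G(n,m,r) and G(n',m',r') are isomorphic, then n = n', m = m' and r = r'. -/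
open scoped commutatorElement

/-- The relations of the presentation `⟨a, b ∣ a^(p^n) = 1, b^(p^m) = 1, [a,b] = a^(p^r)⟩`. -/
def splitRels (p n m r : ℕ) : Set (FreeGroup (Fin 2)) :=
  {FreeGroup.of (0 : Fin 2) ^ p ^ n, FreeGroup.of (1 : Fin 2) ^ p ^ m,
    ⁅FreeGroup.of (0 : Fin 2), FreeGroup.of (1 : Fin 2)⁆ * (FreeGroup.of (0 : Fin 2) ^ p ^ r)⁻¹}

/-- The group `G(n,m,r) = ⟨a, b ∣ a^(p^n) = 1, b^(p^m) = 1, [a,b] = a^(p^r)⟩`. -/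
abbrev GSplit (p n m r : ℕ) : Type := PresentedGroup (splitRels p n m r)

/-!
`G(n,m,r)` has order `p^(n+m)` and exponent `p^max(n,m)`, and its abelianization
`ℤ/p^r × ℤ/p^m` has order `p^(r+m)` and exponent `p^max(r,m)`; under the constraints on the
parameters these four numbers determine `(n, m, r)`.

For the upper bounds, `b` normalises `⟨a⟩`, acting as `a ↦ a^c` with `c = 1 - p^r`, so every
element is `a^i b^j` and `(a^i b^j)^N = a^(i (1 + c' + ⋯ + c'^(N-1))) b^(jN)` with
`c' = c^j ≡ 1 mod p`; for `N = p^K` the geometric sum is divisible by `p^K`. For the lower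
bounds, `G(n,m,r)` maps onto `ℤ/p^n ⋊ ℤ/p^m`, the generator of `ℤ/p^m` acting by multiplication
by `1 - p^r`, whose `p^m`-th power is `1` because `n ≤ r + m`.
-/

open Finset Multiplicative SemidirectProduct

theorem geom_sum_range_mul {R : Type*} [CommSemiring R] (c : R) (A B : ℕ) :
    ∑ l ∈ range (A * B), c ^ l =
      (∑ l ∈ range A, c ^ l) * ∑ s ∈ range B, (c ^ A) ^ s := by
  induction B with
  | zero => simp
  | succ B ih =>
    rw [Nat.mul_succ, sum_range_add, ih, sum_range_succ, mul_add, ← pow_mul]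
    congr 1
    rw [sum_mul]
    exact sum_congr rfl fun l _ => by rw [pow_add, mul_comm]

theorem pow_dvd_geom_sum_pow {R : Type*} [CommRing R] {p : ℕ} {c : R} (hc : (p : R) ∣ c - 1)
    (K : ℕ) : (p : R) ^ K ∣ ∑ l ∈ range (p ^ K), c ^ l := by
  induction K with
  | zero => simp
  | succ K ih =>
    rw [pow_succ, pow_succ, geom_sum_range_mul]
    refine mul_dvd_mul ih ?_
    simpa using dvd_geom_sum₂_self (hc.trans (sub_one_dvd_pow_sub_one c (p ^ K)))

theorem one_sub_pow_pow_pow_eq_one {p n m r : ℕ} (hr : 1 ≤ r) (hn : n ≤ r + m) :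
    (1 - (p : ZMod (p ^ n)) ^ r) ^ p ^ m = 1 := by
  set c : ZMod (p ^ n) := 1 - (p : ZMod (p ^ n)) ^ r
  have hc : c - 1 = -(p : ZMod (p ^ n)) ^ r := by ring
  obtain ⟨t, ht⟩ := pow_dvd_geom_sum_pow (c := c)
    (by rw [hc]; exact (dvd_pow_self _ (by omega)).neg_right) m
  have hpn : (p : ZMod (p ^ n)) ^ (m + r) = 0 := by
    rw [← Nat.cast_pow, ZMod.natCast_eq_zero_iff]
    exact pow_dvd_pow p (by omega)
  rw [← sub_eq_zero, ← geom_sum_mul, ht, hc]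
  linear_combination (-t) * hpn

section Conjugation

variable {G : Type*} [Group G] {h a : G} {c : ℤ}

theorem pow_mul_mul_inv_pow_of_conj (hc : h * a * h⁻¹ = a ^ c) (j : ℕ) :
    h ^ j * a * (h ^ j)⁻¹ = a ^ c ^ j := by
  induction j with
  | zero => simp
  | succ j ih =>
    calc h ^ (j + 1) * a * (h ^ (j + 1))⁻¹ = h * (h ^ j * a * (h ^ j)⁻¹) * h⁻¹ := by group
      _ = a ^ c ^ (j + 1) := by rw [ih, ← conj_zpow, hc, ← zpow_mul, pow_succ']

theorem pow_mul_zpow_of_conj (hc : h * a * h⁻¹ = a ^ c) (j : ℕ) (i : ℤ) :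
    h ^ j * a ^ i = a ^ (c ^ j * i) * h ^ j := by
  rw [zpow_mul, ← pow_mul_mul_inv_pow_of_conj hc, conj_zpow, inv_mul_cancel_right]

theorem zpow_mul_pow_of_conj (hc : h * a * h⁻¹ = a ^ c) (i : ℤ) (N : ℕ) :
    (a ^ i * h) ^ N = a ^ (i * ∑ l ∈ range N, c ^ l) * h ^ N := by
  induction N with
  | zero => simp
  | succ N ih =>
    rw [pow_succ, ih, mul_assoc, ← mul_assoc (h ^ N), pow_mul_zpow_of_conj hc, sum_range_succ,
      mul_add, zpow_add, pow_succ]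
    group

theorem exists_eq_zpow_mul_pow_of_mem_closure {b : G} (hb : IsOfFinOrder b)
    (hc : b * a * b⁻¹ = a ^ c) {x : G} (hx : x ∈ Subgroup.closure {a, b}) :
    ∃ i : ℤ, ∃ j : ℕ, x = a ^ i * b ^ j := by
  induction hx using Subgroup.closure_induction'' with
  | mem x hx =>
    rcases hx with rfl | rfl
    exacts [⟨1, 0, by simp⟩, ⟨0, 1, by simp⟩]
  | inv_mem x hx =>
    rcases hx with rfl | rfl
    · exact ⟨-1, 0, by simp⟩
    · refine ⟨0, orderOf x - 1, ?_⟩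
      rw [zpow_zero, one_mul, inv_eq_iff_mul_eq_one, ← pow_succ',
        Nat.sub_add_cancel hb.orderOf_pos, pow_orderOf_eq_one]
  | one => exact ⟨0, 0, by simp⟩
  | mul x y _ _ hx hy =>
    obtain ⟨i, j, rfl⟩ := hx
    obtain ⟨k, l, rfl⟩ := hy
    refine ⟨i + c ^ j * k, j + l, ?_⟩
    rw [mul_assoc, ← mul_assoc (b ^ j), pow_mul_zpow_of_conj hc, zpow_add, pow_add]
    group

end Conjugation

structure MetacyclicGenerators {G : Type*} [Group G] (p N M : ℕ) (c : ℤ) (a b : G) : Prop where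
  closure_eq_top : Subgroup.closure {a, b} = ⊤
  pow_left : a ^ p ^ N = 1
  pow_right : b ^ p ^ M = 1
  conj_eq : b * a * b⁻¹ = a ^ c
  dvd_sub_one : (p : ℤ) ∣ c - 1

namespace MetacyclicGenerators

variable {G : Type*} [Group G] {p N M : ℕ} {c : ℤ} {a b : G}

theorem isOfFinOrder_left (h : MetacyclicGenerators p N M c a b) (hp : 0 < p) : IsOfFinOrder a :=
  isOfFinOrder_iff_pow_eq_one.mpr ⟨_, pow_pos hp N, h.pow_left⟩

theorem isOfFinOrder_right (h : MetacyclicGenerators p N M c a b) (hp : 0 < p) :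
    IsOfFinOrder b :=
  isOfFinOrder_iff_pow_eq_one.mpr ⟨_, pow_pos hp M, h.pow_right⟩

theorem exists_eq_zpow_mul_pow (h : MetacyclicGenerators p N M c a b) (hp : 0 < p) (x : G) :
    ∃ i : ℤ, ∃ j : ℕ, x = a ^ i * b ^ j :=
  exists_eq_zpow_mul_pow_of_mem_closure (h.isOfFinOrder_right hp) h.conj_eq
    (h.closure_eq_top ▸ Subgroup.mem_top x)

theorem mul_zpowers_surjective (h : MetacyclicGenerators p N M c a b) (hp : 0 < p) :
    Function.Surjective fun x : Subgroup.zpowers a × Subgroup.zpowers b => (x.1 : G) * x.2 := by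
  intro x
  obtain ⟨i, j, rfl⟩ := h.exists_eq_zpow_mul_pow hp x
  exact ⟨(⟨a ^ i, i, rfl⟩, ⟨b ^ j, j, zpow_natCast b j⟩), rfl⟩

theorem finite_zpowers_prod (h : MetacyclicGenerators p N M c a b) (hp : 0 < p) :
    Finite (Subgroup.zpowers a × Subgroup.zpowers b) :=
  have := (h.isOfFinOrder_left hp).finite_zpowers.to_subtype
  have := (h.isOfFinOrder_right hp).finite_zpowers.to_subtype
  inferInstance

theorem finite (h : MetacyclicGenerators p N M c a b) (hp : 0 < p) : Finite G :=
  have := h.finite_zpowers_prod hp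
  .of_surjective _ (h.mul_zpowers_surjective hp)

theorem card_le (h : MetacyclicGenerators p N M c a b) (hp : 0 < p) :
    Nat.card G ≤ p ^ (N + M) := by
  have := h.finite_zpowers_prod hp
  calc Nat.card G ≤ Nat.card (Subgroup.zpowers a × Subgroup.zpowers b) :=
        Nat.card_le_card_of_surjective _ (h.mul_zpowers_surjective hp)
    _ = orderOf a * orderOf b := by rw [Nat.card_prod, Nat.card_zpowers, Nat.card_zpowers]
    _ ≤ p ^ N * p ^ M := Nat.mul_le_mul (orderOf_le_of_pow_eq_one (pow_pos hp N) h.pow_left)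
        (orderOf_le_of_pow_eq_one (pow_pos hp M) h.pow_right)
    _ = p ^ (N + M) := (pow_add p N M).symm

theorem pow_pow_eq_one (h : MetacyclicGenerators p N M c a b) (hp : 0 < p) {K : ℕ}
    (hNK : N ≤ K) (hMK : M ≤ K) (x : G) : x ^ p ^ K = 1 := by
  obtain ⟨i, j, rfl⟩ := h.exists_eq_zpow_mul_pow hp x
  have hcj : (p : ℤ) ∣ c ^ j - 1 := h.dvd_sub_one.trans (sub_one_dvd_pow_sub_one c j)
  rw [zpow_mul_pow_of_conj (pow_mul_mul_inv_pow_of_conj h.conj_eq j), ← pow_mul]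
  have ha : a ^ (i * ∑ l ∈ range (p ^ K), (c ^ j) ^ l) = 1 := by
    rw [← orderOf_dvd_iff_zpow_eq_one]
    have hK : (orderOf a : ℤ) ∣ (p : ℤ) ^ K := by
      exact_mod_cast (orderOf_dvd_of_pow_eq_one h.pow_left).trans (pow_dvd_pow p hNK)
    exact (hK.trans (pow_dvd_geom_sum_pow hcj K)).mul_left i
  have hb : b ^ (j * p ^ K) = 1 := by
    rw [← orderOf_dvd_iff_pow_eq_one]
    exact ((orderOf_dvd_of_pow_eq_one h.pow_right).trans (pow_dvd_pow p hMK)).mul_left j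
  rw [ha, hb, one_mul]

theorem exponent_eq (h : MetacyclicGenerators p N M c a b) (hp : 0 < p) {K : Type*} [Monoid K]
    (f : G →* K) (ha : orderOf (f a) = p ^ N) (hb : orderOf (f b) = p ^ M) :
    Monoid.exponent G = p ^ max N M := by
  refine Nat.dvd_antisymm (Monoid.exponent_dvd_of_forall_pow_eq_one
    (h.pow_pow_eq_one hp (le_max_left N M) (le_max_right N M))) ?_
  rcases max_choice N M with hmax | hmax <;> rw [hmax]
  exacts [ha ▸ (orderOf_map_dvd f a).trans (Monoid.order_dvd_exponent a),
    hb ▸ (orderOf_map_dvd f b).trans (Monoid.order_dvd_exponent b)]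

theorem card_eq (h : MetacyclicGenerators p N M c a b) (hp : 0 < p) {K : Type*} (f : G → K)
    (hf : Function.Surjective f) (hK : Nat.card K = p ^ (N + M)) : Nat.card G = p ^ (N + M) :=
  have := h.finite hp
  (h.card_le hp).antisymm (hK ▸ Nat.card_le_card_of_surjective f hf)

end MetacyclicGenerators

theorem orderOf_ofAdd_one_zmod (k : ℕ) : orderOf (ofAdd (1 : ZMod k)) = k := by
  rw [orderOf_ofAdd_eq_addOrderOf, ZMod.addOrderOf_one]

theorem ofAdd_one_pow_eq_one {k j : ℕ} (h : k ∣ j) : ofAdd (1 : ZMod k) ^ j = 1 := by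
  rwa [← orderOf_dvd_iff_pow_eq_one, orderOf_ofAdd_one_zmod]

theorem ofAdd_one_pow_val {k : ℕ} [NeZero k] (x : ZMod k) :
    ofAdd (1 : ZMod k) ^ x.val = ofAdd x := by
  rw [← ofAdd_nsmul, nsmul_one, ZMod.natCast_zmod_val]

def zmodPowersHom {M : Type*} [Group M] (k : ℕ) (g : M) (hg : g ^ k = 1) :
    Multiplicative (ZMod k) →* M :=
  AddMonoidHom.toMultiplicativeLeft <| ZMod.lift k
    ⟨zmultiplesHom (Additive M) (Additive.ofMul g), by
      simpa [← ofMul_pow] using congrArg Additive.ofMul hg⟩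

theorem zmodPowersHom_ofAdd_one {M : Type*} [Group M] (k : ℕ) (g : M) (hg : g ^ k = 1) :
    zmodPowersHom k g hg (ofAdd 1) = g := by
  rw [zmodPowersHom, AddMonoidHom.toMultiplicativeLeft_apply_apply, toAdd_ofAdd, ← Int.cast_one,
    ZMod.lift_coe]
  simp

/-- `ℤ/k ⋊ ℤ/l`, the generator of `ℤ/l` acting by multiplication by `u`. -/
abbrev MetacyclicModel (k l : ℕ) (u : (ZMod k)ˣ) (hu : u ^ l = 1) : Type :=
  Multiplicative (ZMod k) ⋊[(MulAutMultiplicative (ZMod k)).symm.toMonoidHom.comp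
    ((DistribMulAction.toAddAut (ZMod k)ˣ (ZMod k)).comp (zmodPowersHom l u hu))]
    Multiplicative (ZMod l)

namespace MetacyclicModel

variable {k l : ℕ} {u : (ZMod k)ˣ} {hu : u ^ l = 1}

theorem card : Nat.card (MetacyclicModel k l u hu) = k * l := by
  rw [SemidirectProduct.card, Nat.card_congr toAdd, Nat.card_congr toAdd, Nat.card_zmod,
    Nat.card_zmod]

theorem orderOf_inl_ofAdd_one :
    orderOf (inl (ofAdd (1 : ZMod k)) : MetacyclicModel k l u hu) = k := by
  rw [orderOf_injective _ inl_injective, orderOf_ofAdd_one_zmod]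

theorem orderOf_inr_ofAdd_one :
    orderOf (inr (ofAdd (1 : ZMod l)) : MetacyclicModel k l u hu) = l := by
  rw [orderOf_injective _ inr_injective, orderOf_ofAdd_one_zmod]

theorem inl_ofAdd_one_pow_eq_one :
    (inl (ofAdd (1 : ZMod k)) : MetacyclicModel k l u hu) ^ k = 1 := by
  rw [← orderOf_dvd_iff_pow_eq_one, orderOf_inl_ofAdd_one]

theorem inr_ofAdd_one_pow_eq_one :
    (inr (ofAdd (1 : ZMod l)) : MetacyclicModel k l u hu) ^ l = 1 := by
  rw [← orderOf_dvd_iff_pow_eq_one, orderOf_inr_ofAdd_one]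

theorem commutator_inl_inr :
    ⁅(inl (ofAdd (1 : ZMod k)) : MetacyclicModel k l u hu),
      (inr (ofAdd (1 : ZMod l)) : MetacyclicModel k l u hu)⁆ =
      inl (ofAdd (1 - (u : ZMod k))) := by
  rw [commutatorElement_def, mul_assoc, mul_assoc, ← mul_assoc (inr _), ← map_inv inr,
    ← map_inv inl, ← inl_aut, ← map_mul]
  congr 1
  simp [zmodPowersHom_ofAdd_one, div_eq_mul_inv, Units.smul_def]

theorem commutator_inl_inr_eq_pow {j : ℕ} (hj : (u : ZMod k) = 1 - j) :
    ⁅(inl (ofAdd (1 : ZMod k)) : MetacyclicModel k l u hu),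
      (inr (ofAdd (1 : ZMod l)) : MetacyclicModel k l u hu)⁆ = inl (ofAdd 1) ^ j := by
  rw [commutator_inl_inr, hj, sub_sub_cancel, ← map_pow, ← ofAdd_nsmul, nsmul_one]

theorem exists_eq_pow_mul_pow [NeZero k] [NeZero l] (z : MetacyclicModel k l u hu) :
    ∃ i j : ℕ, z = (inl (ofAdd (1 : ZMod k)) : MetacyclicModel k l u hu) ^ i *
      inr (ofAdd (1 : ZMod l)) ^ j :=
  ⟨z.left.toAdd.val, z.right.toAdd.val, by
    rw [← map_pow inl, ← map_pow inr, ofAdd_one_pow_val, ofAdd_one_pow_val]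
    exact (inl_left_mul_inr_right z).symm⟩

end MetacyclicModel

namespace GSplit

variable {p n m r : ℕ}

def a : GSplit p n m r := PresentedGroup.of 0

def b : GSplit p n m r := PresentedGroup.of 1

theorem a_pow : (a : GSplit p n m r) ^ p ^ n = 1 :=
  (map_pow _ _ _).symm.trans (PresentedGroup.one_of_mem (Or.inl rfl))

theorem b_pow : (b : GSplit p n m r) ^ p ^ m = 1 :=
  (map_pow _ _ _).symm.trans (PresentedGroup.one_of_mem (Or.inr (Or.inl rfl)))

theorem commutator_a_b : ⁅(a : GSplit p n m r), (b : GSplit p n m r)⁆ = a ^ p ^ r := by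
  have := PresentedGroup.one_of_mem (rels := splitRels p n m r) (Or.inr (Or.inr rfl))
  rwa [map_mul, map_inv, map_pow, map_commutatorElement, mul_inv_eq_one] at this

theorem closure_a_b : Subgroup.closure {(a : GSplit p n m r), b} = ⊤ := by
  rw [← PresentedGroup.closure_range_of, Set.range]
  congr 1
  ext x
  simp [Fin.exists_fin_two, a, b, eq_comm]

theorem b_mul_a_mul_b_inv : (b : GSplit p n m r) * a * b⁻¹ = a ^ (1 - (p : ℤ) ^ r) := by
  have h := commutator_a_b (p := p) (n := n) (m := m) (r := r)
  rw [commutatorElement_def, ← zpow_natCast, Nat.cast_pow] at h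
  rw [sub_eq_neg_add, zpow_add, zpow_neg, zpow_one, ← h]
  group

theorem metacyclicGenerators (hr : 1 ≤ r) :
    MetacyclicGenerators p n m (1 - (p : ℤ) ^ r) (a : GSplit p n m r) b where
  closure_eq_top := closure_a_b
  pow_left := a_pow
  pow_right := b_pow
  conj_eq := b_mul_a_mul_b_inv
  dvd_sub_one := by simpa using dvd_pow_self (p : ℤ) (by omega : r ≠ 0)

theorem metacyclicGenerators_abelianization :
    MetacyclicGenerators p r m 1
      (Abelianization.of (a : GSplit p n m r)) (Abelianization.of b) where
  closure_eq_top := by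
    rw [← Set.image_pair, ← MonoidHom.map_closure, closure_a_b,
      Subgroup.map_top_of_surjective _ QuotientGroup.mk_surjective]
  pow_left := by
    rw [← map_pow, ← commutator_a_b, map_commutatorElement, commutatorElement_eq_one_iff_mul_comm]
    exact mul_comm _ _
  pow_right := by rw [← map_pow, b_pow, map_one]
  conj_eq := by rw [mul_inv_eq_iff_eq_mul, zpow_one, mul_comm]
  dvd_sub_one := by simp

def lift {K : Type*} [Group K] {x y : K} (hx : x ^ p ^ n = 1) (hy : y ^ p ^ m = 1)
    (hxy : ⁅x, y⁆ = x ^ p ^ r) : GSplit p n m r →* K :=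
  PresentedGroup.toGroup (f := ![x, y]) <| by
    rintro w (rfl | rfl | rfl) <;> simp [hx, hy, hxy]

section Lift

variable {K : Type*} [Group K] {x y : K} (hx : x ^ p ^ n = 1) (hy : y ^ p ^ m = 1)
    (hxy : ⁅x, y⁆ = x ^ p ^ r)

theorem lift_a : lift hx hy hxy a = x := PresentedGroup.toGroup.of _

theorem lift_b : lift hx hy hxy b = y := PresentedGroup.toGroup.of _

theorem lift_surjective (h : ∀ z : K, ∃ i j : ℕ, z = x ^ i * y ^ j) :
    Function.Surjective (lift hx hy hxy) := by
  intro z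
  obtain ⟨i, j, rfl⟩ := h z
  exact ⟨a ^ i * b ^ j, by rw [map_mul, map_pow, map_pow, lift_a, lift_b]⟩

end Lift

section Model

variable (hp : 0 < p) (hr : 1 ≤ r) (hn : n ≤ r + m)

def modelUnit : (ZMod (p ^ n))ˣ :=
  Units.ofPowEqOne _ (p ^ m) (one_sub_pow_pow_pow_eq_one hr hn) (pow_pos hp m).ne'

theorem modelUnit_pow : modelUnit hp hr hn ^ p ^ m = 1 := Units.pow_ofPowEqOne _ _

theorem modelUnit_val :
    (modelUnit hp hr hn : ZMod (p ^ n)) = 1 - ((p ^ r : ℕ) : ZMod (p ^ n)) := by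
  rw [modelUnit, Units.val_ofPowEqOne, Nat.cast_pow]

def toModel : GSplit p n m r →*
    MetacyclicModel (p ^ n) (p ^ m) (modelUnit hp hr hn) (modelUnit_pow hp hr hn) :=
  lift MetacyclicModel.inl_ofAdd_one_pow_eq_one MetacyclicModel.inr_ofAdd_one_pow_eq_one
    (MetacyclicModel.commutator_inl_inr_eq_pow (modelUnit_val hp hr hn))

theorem toModel_a : toModel hp hr hn a = inl (ofAdd 1) := lift_a _ _ _

theorem toModel_b : toModel hp hr hn b = inr (ofAdd 1) := lift_b _ _ _

theorem toModel_surjective : Function.Surjective (toModel hp hr hn : GSplit p n m r →* _) :=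
  have : NeZero p := ⟨hp.ne'⟩
  lift_surjective _ _ _ MetacyclicModel.exists_eq_pow_mul_pow

end Model

theorem card_eq (hp : 0 < p) (hr : 1 ≤ r) (hn : n ≤ r + m) :
    Nat.card (GSplit p n m r) = p ^ (n + m) :=
  (metacyclicGenerators hr).card_eq hp _ (toModel_surjective hp hr hn)
    (by rw [MetacyclicModel.card, pow_add])

theorem exponent_eq (hp : 0 < p) (hr : 1 ≤ r) (hn : n ≤ r + m) :
    Monoid.exponent (GSplit p n m r) = p ^ max n m :=
  (metacyclicGenerators hr).exponent_eq hp (toModel hp hr hn)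
    (by rw [toModel_a, MetacyclicModel.orderOf_inl_ofAdd_one])
    (by rw [toModel_b, MetacyclicModel.orderOf_inr_ofAdd_one])

def toAbelianModel (hrn : r ≤ n) :
    GSplit p n m r →* Multiplicative (ZMod (p ^ r)) × Multiplicative (ZMod (p ^ m)) :=
  lift (x := (ofAdd 1, 1)) (y := (1, ofAdd 1))
    (Prod.ext (ofAdd_one_pow_eq_one (pow_dvd_pow p hrn)) (one_pow _))
    (Prod.ext (one_pow _) (ofAdd_one_pow_eq_one dvd_rfl))
    (by rw [commutatorElement_eq_one_iff_mul_comm.mpr (mul_comm _ _)]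
        exact (Prod.ext (ofAdd_one_pow_eq_one dvd_rfl) (one_pow _)).symm)

theorem toAbelianModel_a (hrn : r ≤ n) :
    toAbelianModel (p := p) (m := m) hrn a = (ofAdd 1, 1) := lift_a _ _ _

theorem toAbelianModel_b (hrn : r ≤ n) :
    toAbelianModel (p := p) (m := m) hrn b = (1, ofAdd 1) := lift_b _ _ _

theorem toAbelianModel_surjective (hp : 0 < p) (hrn : r ≤ n) :
    Function.Surjective (toAbelianModel (p := p) (m := m) hrn) := by
  have : NeZero p := ⟨hp.ne'⟩
  refine lift_surjective _ _ _ fun z => ⟨z.1.toAdd.val, z.2.toAdd.val, ?_⟩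
  ext <;> simp [ofAdd_one_pow_val]

theorem lift_toAbelianModel_surjective (hp : 0 < p) (hrn : r ≤ n) :
    Function.Surjective (Abelianization.lift (toAbelianModel (p := p) (m := m) hrn)) :=
  .of_comp (g := Abelianization.of) <| by
    simpa only [Function.comp_def, Abelianization.lift_apply_of] using
      toAbelianModel_surjective hp hrn

theorem card_abelianization_eq (hp : 0 < p) (hrn : r ≤ n) :
    Nat.card (Abelianization (GSplit p n m r)) = p ^ (r + m) :=
  metacyclicGenerators_abelianization.card_eq hp _ (lift_toAbelianModel_surjective hp hrn) <| by
    rw [Nat.card_prod, Nat.card_congr toAdd, Nat.card_congr toAdd, Nat.card_zmod, Nat.card_zmod,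
      pow_add]

theorem exponent_abelianization_eq (hp : 0 < p) (hrn : r ≤ n) :
    Monoid.exponent (Abelianization (GSplit p n m r)) = p ^ max r m :=
  metacyclicGenerators_abelianization.exponent_eq hp (Abelianization.lift (toAbelianModel hrn))
    (by rw [Abelianization.lift_apply_of, toAbelianModel_a, Prod.orderOf_mk, orderOf_one,
      Nat.lcm_one_right, orderOf_ofAdd_one_zmod])
    (by rw [Abelianization.lift_apply_of, toAbelianModel_b, Prod.orderOf_mk, orderOf_one,
      Nat.lcm_one_left, orderOf_ofAdd_one_zmod])

end GSplit

/-- The parameters `(n, m, r)` of the group `G(n,m,r)` are structural invariants: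
isomorphic groups in this family have equal parameters. -/
theorem gSplit_injective_parameters
    (p : ℕ) (hp : p.Prime) (n m r n' m' r' : ℕ)
    (hr : 2 ≤ r) (hrn : r + 1 ≤ n) (hm : n - r ≤ m)
    (hr' : 2 ≤ r') (hrn' : r' + 1 ≤ n') (hm' : n' - r' ≤ m')
    (hiso : Nonempty (GSplit p n m r ≃* GSplit p n' m' r')) :
    n = n' ∧ m = m' ∧ r = r' := by
  obtain ⟨e⟩ := hiso
  have hinj := Nat.pow_right_injective hp.two_le
  have hcard : n + m = n' + m' := hinj <| by
    simpa only [GSplit.card_eq hp.pos (by omega : 1 ≤ r) (by omega : n ≤ r + m),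
      GSplit.card_eq hp.pos (by omega : 1 ≤ r') (by omega : n' ≤ r' + m')]
      using Nat.card_congr e.toEquiv
  have hexp : max n m = max n' m' := hinj <| by
    simpa only [GSplit.exponent_eq hp.pos (by omega : 1 ≤ r) (by omega : n ≤ r + m),
      GSplit.exponent_eq hp.pos (by omega : 1 ≤ r') (by omega : n' ≤ r' + m')]
      using Monoid.exponent_eq_of_mulEquiv e
  have hcard_ab : r + m = r' + m' := hinj <| by
    simpa only [GSplit.card_abelianization_eq hp.pos (by omega : r ≤ n),
      GSplit.card_abelianization_eq hp.pos (by omega : r' ≤ n')]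
      using Nat.card_congr e.abelianizationCongr.toEquiv
  have hexp_ab : max r m = max r' m' := hinj <| by
    simpa only [GSplit.exponent_abelianization_eq hp.pos (by omega : r ≤ n),
      GSplit.exponent_abelianization_eq hp.pos (by omega : r' ≤ n')]
      using Monoid.exponent_eq_of_mulEquiv e.abelianizationCongr
  omega
end

section
/- Let p be a prime and x ≥ 4 an integer. The number of triples of integers (n,m,r) with n + m = x, 2 ≤ r ≤ n − 1 and n − r ≤ m (equivalently, the number of isomorphism classes of groups G(n,m,r) of order p^x) equals ((x−2)/2)^2 if x is even, and (x−3)(x−1)/4 if x is odd. -/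
/-!
Writing `a = r - 2` and `b = n - r - 1`, the triples `(n, m, r)` correspond to the lattice points
`(a, b)` with `a + 2b + 4 ≤ x`, a staircase triangle of rows of lengths `x - 3, x - 5, …`. Folding
the part of row `b` beyond column `L = ⌊(x-1)/2⌋` into row `K - 1 - b`, with `K = ⌊(x-2)/2⌋`,
rearranges the triangle into a `K × L` rectangle, because rows `b` and `K - 1 - b` have `2L`
points together. The product `K * L` is the stated closed form.
-/

open scoped commutatorElement

open Finset

theorem card_filter_add_two_mul_add_one_lt {K L : ℕ} (hKL : K ≤ L) (hLK : L ≤ K + 1) :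
    #{q ∈ range (K + L) ×ˢ range (K + L) | q.1 + 2 * q.2 + 1 < K + L} = K * L := by
  rw [show K * L = #(range K ×ˢ range L) by simp]
  refine card_nbij'
    (fun q => if q.1 < L then (q.2, q.1) else (K - 1 - q.2, 2 * L - 1 - q.1))
    (fun p => if p.2 + 2 * p.1 + 1 < K + L then (p.2, p.1) else (2 * L - 1 - p.2, K - 1 - p.1))
    ?_ ?_ ?_ ?_ <;>
  · rintro ⟨a, b⟩ h
    simp only [mem_coe, mem_filter, mem_product, mem_range] at h ⊢
    split_ifs <;> simp only [Prod.mk.injEq] <;> omega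

theorem half_mul_half_eq (x : ℕ) :
    (x - 2) / 2 * ((x - 1) / 2) = if Even x then ((x - 2) / 2) ^ 2 else (x - 3) * (x - 1) / 4 := by
  obtain ⟨k, rfl | rfl⟩ := Nat.even_or_odd' x
  · rw [if_pos (even_two_mul k), sq, show (2 * k - 1) / 2 = (2 * k - 2) / 2 by omega]
  · rw [if_neg (Nat.not_even_iff_odd.2 (odd_two_mul_add_one k)),
      show (2 * k + 1 - 2) / 2 = k - 1 by omega, show (2 * k + 1 - 1) / 2 = k by omega,
      show 2 * k + 1 - 3 = 2 * (k - 1) by omega, show 2 * k + 1 - 1 = 2 * k by omega,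
      show 2 * (k - 1) * (2 * k) = 4 * ((k - 1) * k) by ring, Nat.mul_div_cancel_left _ four_pos]

theorem count_split_groups_general (x : ℕ) :
    ((Finset.range (x + 1) ×ˢ Finset.range (x + 1) ×ˢ Finset.range (x + 1)).filter
        (fun t : ℕ × ℕ × ℕ =>
          t.1 + t.2.1 = x ∧ 2 ≤ t.2.2 ∧ t.2.2 + 1 ≤ t.1 ∧ t.1 - t.2.2 ≤ t.2.1)).card =
      if Even x then ((x - 2) / 2) ^ 2 else (x - 3) * (x - 1) / 4 := by
  rw [← half_mul_half_eq, ← card_filter_add_two_mul_add_one_lt (by omega) (by omega),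
    show (x - 2) / 2 + (x - 1) / 2 = x - 2 by omega]
  refine card_nbij' (fun t => (t.2.2 - 2, t.1 - t.2.2 - 1))
    (fun q => (q.1 + q.2 + 3, x - (q.1 + q.2 + 3), q.1 + 2)) ?_ ?_ ?_ ?_
    <;> intro _ h
    <;> simp only [mem_coe, mem_filter, mem_product, mem_range, Prod.ext_iff] at h ⊢
    <;> omega

/-- For `x ≥ 4`, the number of triples `(n, m, r)` with `n + m = x`, `2 ≤ r ≤ n - 1` and
`n - r ≤ m` (equivalently, the number of isomorphism classes of groups `G(n,m,r)` of order
`p^x`) equals `((x-2)/2)^2` if `x` is even and `(x-3)*(x-1)/4` if `x` is odd. -/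
theorem count_split_groups (p : ℕ) (hp : p.Prime) (x : ℕ) (hx : 4 ≤ x) :
    ((Finset.range (x + 1) ×ˢ Finset.range (x + 1) ×ˢ Finset.range (x + 1)).filter
        (fun t : ℕ × ℕ × ℕ =>
          t.1 + t.2.1 = x ∧ 2 ≤ t.2.2 ∧ t.2.2 + 1 ≤ t.1 ∧ t.1 - t.2.2 ≤ t.2.1)).card =
      if Even x then ((x - 2) / 2) ^ 2 else (x - 3) * (x - 1) / 4 :=
  count_split_groups_general x
end

section
/- Let p be a prime. Every powerfully nilpotent p-group of order at most p^3 is abelian. -/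
/-- Every powerfully nilpotent `p`-group of order at most `p^3` is abelian. -/
theorem abelian_of_powerfullyNilpotent_of_card_le
    (p : ℕ) (hp : p.Prime) (G : Type*) [Group G] [Finite G]
    (hG : IsPowerfullyNilpotent p G) (hcard : Nat.card G ≤ p ^ 3) :
    ∀ x y : G, x * y = y * x := by
  have hFact : Fact p.Prime := ⟨hp⟩
  obtain ⟨⟨hpG, -⟩, n, H, h0, hn, -, hpc⟩ := hG
  by_contra hne
  push_neg at hne
  obtain ⟨x, y, hxy⟩ := hne
  have hnt : Nontrivial G := by
    by_contra h
    rw [not_nontrivial_iff_subsingleton] at h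
    exact hxy (Subsingleton.elim _ _)
  obtain ⟨k, hk0, hk⟩ := (IsPGroup.nontrivial_iff_card hpG).mp hnt
  have hp1 : 1 < p := hp.one_lt
  have hk3 : k ≤ 3 := by
    by_contra h
    push_neg at h
    have := hk ▸ hcard
    exact absurd (Nat.pow_le_pow_iff_right hp1 |>.mp this) (by omega)
  -- dispatch small cases
  interval_cases k
  · -- k = 1 : cyclic of prime order
    have : IsCyclic G := isCyclic_of_prime_card (by simpa using hk)
    letI : CommGroup G := IsCyclic.commGroup
    exact hxy (mul_comm x y)
  · exact hxy (IsPGroup.commutative_of_card_eq_prime_sq hk x y)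
  · -- k = 3 : main case
    -- first: the center has order exactly p
    obtain ⟨m, hm0, hm⟩ := IsPGroup.card_center_eq_prime_pow hk (by norm_num)
    have hcardeq := Subgroup.card_eq_card_quotient_mul_card_subgroup (Subgroup.center G)
    have hm1 : m = 1 := by
      by_contra hm1
      have hm2 : 2 ≤ m := by omega
      have hQdvd : Nat.card (G ⧸ Subgroup.center G) ∣ p := by
        have hple : p ^ m ∣ p ^ 3 :=
          ⟨Nat.card (G ⧸ Subgroup.center G), by rw [← hm, ← hk, hcardeq, mul_comm]⟩
        have hm3 : m ≤ 3 := (Nat.pow_dvd_pow_iff_le_right hp1).mp hple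
        have : Nat.card (G ⧸ Subgroup.center G) * p ^ m = p ^ 3 := by
          rw [← hm, ← hk, hcardeq]
        have h2 : Nat.card (G ⧸ Subgroup.center G) = p ^ (3 - m) := by
          have h3 : p ^ (3 - m) * p ^ m = p ^ 3 := by
            rw [← pow_add, Nat.sub_add_cancel hm3]
          exact Nat.eq_of_mul_eq_mul_right (pow_pos (show 0 < p by omega) m)
            (by rw [this, ← h3])
        rw [h2]
        have h4 : p ^ (3 - m) ∣ p ^ 1 := pow_dvd_pow p (by omega)
        rwa [pow_one] at h4
      have : IsCyclic (G ⧸ Subgroup.center G) := isCyclic_of_card_dvd_prime hQdvd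
      exact hxy (commutative_of_cyclic_center_quotient (QuotientGroup.mk' (Subgroup.center G))
        (by rw [QuotientGroup.ker_mk']) x y)
    rw [hm1, pow_one] at hm
    -- pPow p of a subgroup of the center is trivial
    have hpow : ∀ K : Subgroup G, K ≤ Subgroup.center G → K.pPow p = ⊥ := by
      intro K hK
      rw [Subgroup.pPow, eq_bot_iff, ← Subgroup.closure_singleton_one]
      apply Subgroup.closure_mono
      rintro - ⟨g, hg, rfl⟩
      have : (⟨g, hK hg⟩ : Subgroup.center G) ^ p = 1 := by
        rw [← hm]; exact pow_card_eq_one'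
      have : g ^ p = 1 := by
        simpa using congrArg (Subtype.val) this
      simp [this]
    -- every H i is contained in the center
    have hchain : ∀ i ≤ n, H i ≤ Subgroup.center G := by
      intro i
      induction i with
      | zero => intro _; rw [h0]; exact bot_le
      | succ i ih =>
        intro hin
        have hlt : i < n := by omega
        have h1 : ⁅H (i + 1), (⊤ : Subgroup G)⁆ ≤ ⊥ := by
          rw [← hpow (H i) (ih (by omega))]
          exact hpc i hlt
        have h2 : ⁅H (i + 1), (⊤ : Subgroup G)⁆ = ⊥ := le_bot_iff.mp h1
        rw [Subgroup.commutator_eq_bot_iff_le_centralizer] at h2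
        rw [← Subgroup.centralizer_univ, ← Subgroup.coe_top]
        exact h2
    have : (⊤ : Subgroup G) ≤ Subgroup.center G := hn ▸ hchain n le_rfl
    exact hxy (Subgroup.mem_center_iff.mp (this (Subgroup.mem_top y)) x)
end
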